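/- arXiv:1104.5264 — 2 statements merged into one kernel-verified Lean document; each statement's English description precedes it below -/
import Mathlib

section
/- Let H be a Hilbert space, A : D(A) ⊆ H → H self-adjoint with 0 ∈ ρ(A), and τ : D(A) → ℂⁿ a bounded surjective linear map (with respect to the graph norm) with dense kernel. Define G₀ := (τ ∘ (−A)^{-1})* : ℂⁿ → H. Then R(G₀) ∩ D(A) = {0}. -/
open ContinuousLinearMap

/-- Let `A` be self-adjoint with `0 ∈ ρ(A)` and `τ : D(A) → ℂⁿ` bounded, surjective, with dense
kernel. Writing `B := (−A)⁻¹ : H →L H` (bounded, self-adjoint, injective, with `D(A) = ran B`)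
and `T := τ ∘ (−A)⁻¹ : H →L ℂⁿ`, so that `G₀ = T*`, the kernel of `τ` is `B '' (ker T)` and the
conclusion `R(G₀) ∩ D(A) = {0}` reads `range T* ∩ range B = {0}`. -/
theorem stmt6 {H : Type*} [NormedAddCommGroup H] [InnerProductSpace ℂ H] [CompleteSpace H]
    (n : ℕ) (B : H →L[ℂ] H) (hBsa : IsSelfAdjoint B) (hBinj : Function.Injective B)
    (T : H →L[ℂ] EuclideanSpace ℂ (Fin n)) (hTsurj : Function.Surjective T)
    (hdense : Dense (B '' (LinearMap.ker (T : H →ₗ[ℂ] EuclideanSpace ℂ (Fin n)) : Set H))) :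
    Set.range (ContinuousLinearMap.adjoint T) ∩ Set.range B = {0} := by
  ext x
  simp only [Set.mem_inter_iff, Set.mem_range, Set.mem_singleton_iff]
  constructor
  · rintro ⟨⟨ξ, hξ⟩, v, hv⟩
    -- show v = 0
    have hv0 : v = 0 := by
      have key : (fun w => (inner ℂ v w : ℂ)) = fun _ => (0 : ℂ) := by
        apply Continuous.ext_on hdense (continuous_const.inner continuous_id) continuous_const
        rintro w ⟨u, hu, rfl⟩
        show (inner ℂ v (B u) : ℂ) = 0
        have h1 : (inner ℂ v (B u) : ℂ) = inner ℂ (B v) u := by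
          conv_lhs => rw [← hBsa.adjoint_eq, ContinuousLinearMap.adjoint_inner_right]
        rw [h1, hv, ← hξ, ContinuousLinearMap.adjoint_inner_left]
        simp [show T u = 0 from LinearMap.mem_ker.mp hu]
      have := congrFun key v
      simpa [inner_self_eq_zero] using this
    rw [← hv, hv0, map_zero]
  · rintro rfl
    exact ⟨⟨0, by simp⟩, 0, by simp⟩
end

section
/- Let A : D(A) ⊆ H → H be self-adjoint with −A > 0 and 0 ∈ ρ(A), and τ : D(A) → ℂⁿ bounded surjective with dense kernel. For (Π, Θ) with Π an orthogonal projection on ℂⁿ and Θ a symmetric operator on ran Π, the operator R_z := (−A+z)^{-1} + G_z Π(Θ + zΠ G₀*G_zΠ)^{-1}Π G_{z̄}* satisfies the resolvent identity R_z − R_w = (w−z)R_w R_z for z, w in the common domain of validity. -/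
open ContinuousLinearMap

set_option maxHeartbeats 2000000 in
/-- The Kreĭn-type operator `R_z := (−A+z)⁻¹ + G_z Π(Θ + zΠ G₀*G_zΠ)⁻¹ Π G_{z̄}*` satisfies the
first resolvent identity `R_z − R_w = (w − z) R_w R_z`.

Data: `Rz = (−A+z)⁻¹`, `Rw = (−A+w)⁻¹` (free resolvents of the self-adjoint `A`, satisfying the
first resolvent identity); `G0, Gz, Gw, Gzbar, Gwbar : ℂⁿ → H` the maps `G_0, G_z, G_w, G_{z̄},
G_{w̄}` with their mutual resolvent relations; `P = Π` an orthogonal projection on `ℂⁿ`;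
`Θ` symmetric with `ΠΘΠ = Θ`; `Fz, Fw` the inverses of `Θ + zΠG₀*G_zΠ`, `Θ + wΠG₀*G_wΠ` on
`ran Π`. -/
theorem stmt18 {H : Type*} [NormedAddCommGroup H] [InnerProductSpace ℂ H] [CompleteSpace H]
    (n : ℕ) (z w : ℂ)
    (Rz Rw : H →L[ℂ] H)
    (G0 Gz Gw Gzbar Gwbar : EuclideanSpace ℂ (Fin n) →L[ℂ] H)
    (P Θ Fz Fw : EuclideanSpace ℂ (Fin n) →L[ℂ] EuclideanSpace ℂ (Fin n))
    (hres : Rw - Rz = (z - w) • (Rw.comp Rz))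
    (hcomm : Rw.comp Rz = Rz.comp Rw)
    (hG : Gw - Gz = (z - w) • (Rw.comp Gz))
    (hGadj : (ContinuousLinearMap.adjoint Gzbar) - (ContinuousLinearMap.adjoint Gwbar)
      = (w - z) • ((ContinuousLinearMap.adjoint Gzbar).comp Rw))
    (hQ : z • ((ContinuousLinearMap.adjoint G0).comp Gz)
          - w • ((ContinuousLinearMap.adjoint G0).comp Gw)
        = (z - w) • ((ContinuousLinearMap.adjoint Gwbar).comp Gz))
    (hP : IsIdempotentElem P) (hPadj : ContinuousLinearMap.adjoint P = P)
    (hΘ : P.comp (Θ.comp P) = Θ)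
    (hΘadj : ContinuousLinearMap.adjoint Θ = Θ)
    (hFz1 : Fz.comp (Θ + z • (P.comp (((ContinuousLinearMap.adjoint G0).comp Gz).comp P))) = P)
    (hFz2 : (Θ + z • (P.comp (((ContinuousLinearMap.adjoint G0).comp Gz).comp P))).comp Fz = P)
    (hFz3 : P.comp (Fz.comp P) = Fz)
    (hFw1 : Fw.comp (Θ + w • (P.comp (((ContinuousLinearMap.adjoint G0).comp Gw).comp P))) = P)
    (hFw2 : (Θ + w • (P.comp (((ContinuousLinearMap.adjoint G0).comp Gw).comp P))).comp Fw = P)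
    (hFw3 : P.comp (Fw.comp P) = Fw) :
    (Rz + Gz.comp (P.comp (Fz.comp (P.comp (ContinuousLinearMap.adjoint Gzbar)))))
      - (Rw + Gw.comp (P.comp (Fw.comp (P.comp (ContinuousLinearMap.adjoint Gwbar)))))
    = (w - z) •
      ((Rw + Gw.comp (P.comp (Fw.comp (P.comp (ContinuousLinearMap.adjoint Gwbar))))).comp
        (Rz + Gz.comp (P.comp (Fz.comp (P.comp (ContinuousLinearMap.adjoint Gzbar)))))) := by
  set Gz' := ContinuousLinearMap.adjoint Gzbar with hGz'
  set Gw' := ContinuousLinearMap.adjoint Gwbar with hGw'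
  set G0' := ContinuousLinearMap.adjoint G0 with hG0'
  set L := w - z with hL
  have hPP : P.comp P = P := hP
  -- P absorbs Fz, Fw on both sides
  have hPFz : P.comp Fz = Fz := by
    conv_lhs => rw [← hFz3, ← ContinuousLinearMap.comp_assoc, hPP]
    exact hFz3
  have hFzP : Fz.comp P = Fz := by
    conv_lhs => rw [← hFz3, ContinuousLinearMap.comp_assoc, ContinuousLinearMap.comp_assoc, hPP,
      ← ContinuousLinearMap.comp_assoc]
    exact hFz3
  have hPFw : P.comp Fw = Fw := by
    conv_lhs => rw [← hFw3, ← ContinuousLinearMap.comp_assoc, hPP]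
    exact hFw3
  have hFwP : Fw.comp P = Fw := by
    conv_lhs => rw [← hFw3, ContinuousLinearMap.comp_assoc, ContinuousLinearMap.comp_assoc, hPP,
      ← ContinuousLinearMap.comp_assoc]
    exact hFw3
  -- simplify the Kreĭn terms
  have hBz : P.comp (Fz.comp (P.comp Gz')) = Fz.comp Gz' := by
    rw [← ContinuousLinearMap.comp_assoc Fz P Gz', ← ContinuousLinearMap.comp_assoc P, hFz3]
  have hBw : P.comp (Fw.comp (P.comp Gw')) = Fw.comp Gw' := by
    rw [← ContinuousLinearMap.comp_assoc Fw P Gw', ← ContinuousLinearMap.comp_assoc P, hFw3]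
  rw [hBz, hBw]
  -- basic scaled identities
  have hRR : L • (Rw.comp Rz) = Rz - Rw := by
    rw [hL, ← neg_sub z w, neg_smul, ← hres, neg_sub]
  have hA : L • (Rw.comp Gz) = Gz - Gw := by
    rw [hL, ← neg_sub z w, neg_smul, ← hG, neg_sub]
  have hGadj' : L • (Gz'.comp Rw) = Gz' - Gw' := hGadj.symm
  -- (ii) : L • (Gw' ∘ Rz) = Gz' - Gw'
  have hB : L • (Gw'.comp Rz) = Gz' - Gw' := by
    have h1 : Gz'.comp Rz - Gw'.comp Rz = L • (Gz'.comp (Rw.comp Rz)) := by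
      rw [← ContinuousLinearMap.sub_comp, hGadj, ContinuousLinearMap.smul_comp,
        ContinuousLinearMap.comp_assoc]
    have h2 : L • (Gz'.comp (Rw.comp Rz)) = Gz'.comp Rz - Gz'.comp Rw := by
      rw [← ContinuousLinearMap.comp_smul, hRR, ContinuousLinearMap.comp_sub]
    have h3 : Gw'.comp Rz = Gz'.comp Rw := sub_right_inj.mp (h1.trans h2)
    rw [h3]; exact hGadj'
  -- (iii) : L • (Fw ∘ (Gw' ∘ Gz) ∘ Fz) = Fz - Fw
  have hC : L • (Fw.comp ((Gw'.comp Gz).comp Fz)) = Fz - Fw := by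
    have hTwTz : w • (P.comp ((G0'.comp Gw).comp P)) - z • (P.comp ((G0'.comp Gz).comp P))
        = L • (P.comp ((Gw'.comp Gz).comp P)) := by
      have : w • (P.comp ((G0'.comp Gw).comp P)) - z • (P.comp ((G0'.comp Gz).comp P))
          = P.comp (((w • (G0'.comp Gw) - z • (G0'.comp Gz))).comp P) := by
        rw [ContinuousLinearMap.sub_comp, ContinuousLinearMap.comp_sub,
          ContinuousLinearMap.smul_comp, ContinuousLinearMap.comp_smul,
          ContinuousLinearMap.smul_comp, ContinuousLinearMap.comp_smul]
      rw [this]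
      have h2 : w • (G0'.comp Gw) - z • (G0'.comp Gz) = L • (Gw'.comp Gz) := by
        rw [hL, ← neg_sub z w, neg_smul, ← hQ]; abel
      rw [h2, ContinuousLinearMap.smul_comp, ContinuousLinearMap.comp_smul]
    have hFzeq : Fz = Fw.comp ((Θ + w • (P.comp ((G0'.comp Gw).comp P))).comp Fz) := by
      rw [← ContinuousLinearMap.comp_assoc, hFw1, hPFz]
    have hFweq : Fw = Fw.comp ((Θ + z • (P.comp ((G0'.comp Gz).comp P))).comp Fz) := by
      rw [hFz2, hFwP]
    calc L • (Fw.comp ((Gw'.comp Gz).comp Fz))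
        = Fw.comp ((L • (P.comp ((Gw'.comp Gz).comp P))).comp Fz) := by
          rw [ContinuousLinearMap.smul_comp, ContinuousLinearMap.comp_smul,
            ContinuousLinearMap.comp_assoc, ContinuousLinearMap.comp_assoc,
            ContinuousLinearMap.comp_assoc, hPFz, ← ContinuousLinearMap.comp_assoc Fw P,
            hFwP, ContinuousLinearMap.comp_assoc]
      _ = Fw.comp (((w • (P.comp ((G0'.comp Gw).comp P)) - z • (P.comp ((G0'.comp Gz).comp P)))).comp Fz) := by
          rw [hTwTz]
      _ = Fw.comp (((Θ + w • (P.comp ((G0'.comp Gw).comp P)))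
            - (Θ + z • (P.comp ((G0'.comp Gz).comp P)))).comp Fz) := by
          congr 2; abel
      _ = Fz - Fw := by
          rw [ContinuousLinearMap.sub_comp, ContinuousLinearMap.comp_sub, ← hFzeq, ← hFweq]
  -- expand the right-hand side and conclude
  have e1 : L • (Rw.comp (Gz.comp (Fz.comp Gz')))
      = Gz.comp (Fz.comp Gz') - Gw.comp (Fz.comp Gz') := by
    rw [← ContinuousLinearMap.comp_assoc, ← ContinuousLinearMap.smul_comp, hA,
      ContinuousLinearMap.sub_comp]
  have e2 : L • ((Gw.comp (Fw.comp Gw')).comp Rz)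
      = Gw.comp (Fw.comp Gz') - Gw.comp (Fw.comp Gw') := by
    rw [ContinuousLinearMap.comp_assoc, ContinuousLinearMap.comp_assoc,
      ← ContinuousLinearMap.comp_smul, ← ContinuousLinearMap.comp_smul, hB,
      ContinuousLinearMap.comp_sub, ContinuousLinearMap.comp_sub]
  have e3 : L • ((Gw.comp (Fw.comp Gw')).comp (Gz.comp (Fz.comp Gz')))
      = Gw.comp (Fz.comp Gz') - Gw.comp (Fw.comp Gz') := by
    have assoc : (Gw.comp (Fw.comp Gw')).comp (Gz.comp (Fz.comp Gz'))
        = Gw.comp ((Fw.comp ((Gw'.comp Gz).comp Fz)).comp Gz') := by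
      simp only [ContinuousLinearMap.comp_assoc]
    rw [assoc, ← ContinuousLinearMap.comp_smul, ← ContinuousLinearMap.smul_comp, hC,
      ContinuousLinearMap.sub_comp, ContinuousLinearMap.comp_sub]
  calc (Rz + Gz.comp (Fz.comp Gz')) - (Rw + Gw.comp (Fw.comp Gw'))
      = (L • (Rw.comp Rz) + L • (Rw.comp (Gz.comp (Fz.comp Gz'))))
        + (L • ((Gw.comp (Fw.comp Gw')).comp Rz)
          + L • ((Gw.comp (Fw.comp Gw')).comp (Gz.comp (Fz.comp Gz')))) := by
        rw [hRR, e1, e2, e3]; abel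
    _ = L • ((Rw + Gw.comp (Fw.comp Gw')).comp (Rz + Gz.comp (Fz.comp Gz'))) := by
        rw [ContinuousLinearMap.add_comp, ContinuousLinearMap.comp_add,
          ContinuousLinearMap.comp_add, smul_add, smul_add, smul_add]
end
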